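/- For all X, Y ∈ W, −tr(S_X∘S_Y) = 2∑_A ⟨S_{e_A}(X), S_{e_A}(Y)⟩, where (e_A) is any orthonormal basis of W. -/

import Mathlib

open scoped RealInnerProductSpace

/-! `S_X` exchanges `W` and `Wᗮ`, so `S_X S_Y` is the sum of an endomorphism of `W` and one of
`Wᗮ`, namely `-A_{Π(Y, ·)} X` and `-Π(X, A_· Y)`. Their traces are both
`∑ ⟨Π(X, e_A), Π(Y, e_A)⟩`: the second is turned into a trace over `W` by cyclicity, and the
Weingarten equation together with the symmetry of `Π` evaluates both on the basis `e_A`. Finally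
`S_{e_A} X = Π(e_A, X)`. -/

/-- The endomorphism `S_X` of `V` associated to a second fundamental form `Π` and its
Weingarten operator `A`: `S_X(Z) = Π(X, P_W Z) - A_{P_{W^⊥} Z}(X)`. -/
noncomputable def Sop {V : Type*} [NormedAddCommGroup V] [InnerProductSpace ℝ V]
    [FiniteDimensional ℝ V] (W : Submodule ℝ V)
    (Pi : W →ₗ[ℝ] W →ₗ[ℝ] ↥Wᗮ) (A : ↥Wᗮ →ₗ[ℝ] W →ₗ[ℝ] W) (X : W) : V →ₗ[ℝ] V :=
  Wᗮ.subtype ∘ₗ (Pi X) ∘ₗ W.orthogonalProjection.toLinearMap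
    - W.subtype ∘ₗ (A.flip X) ∘ₗ Wᗮ.orthogonalProjection.toLinearMap

theorem Submodule.trace_subtype_comp_comp_orthogonalProjectionOnto {𝕜 E : Type*} [RCLike 𝕜]
    [NormedAddCommGroup E] [InnerProductSpace 𝕜 E] [FiniteDimensional 𝕜 E]
    (K : Submodule 𝕜 E) (M : K →ₗ[𝕜] K) :
    LinearMap.trace 𝕜 E (K.subtype ∘ₗ M ∘ₗ K.orthogonalProjectionOnto.toLinearMap)
      = LinearMap.trace 𝕜 K M := by
  have hPι : K.orthogonalProjectionOnto.toLinearMap ∘ₗ K.subtype = LinearMap.id := by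
    ext x
    simp
  rw [LinearMap.trace_comp_comm', LinearMap.comp_assoc, hPι, LinearMap.comp_id]

theorem trace_flip_comp_eq_sum_inner {V : Type*} [NormedAddCommGroup V] [InnerProductSpace ℝ V]
    {W : Submodule ℝ V} {Pi : W →ₗ[ℝ] W →ₗ[ℝ] ↥Wᗮ} {A : ↥Wᗮ →ₗ[ℝ] W →ₗ[ℝ] W}
    (hsymm : ∀ X Y : W, Pi X Y = Pi Y X)
    (hWein : ∀ (ξ : ↥Wᗮ) (X Y : W), ⟪((A ξ X : W) : V), (Y : V)⟫ = ⟪((Pi X Y : ↥Wᗮ) : V), (ξ : V)⟫)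
    {ι : Type*} [Fintype ι] (eW : OrthonormalBasis ι ℝ ↥W) (X Y : W) :
    LinearMap.trace ℝ W (A.flip Y ∘ₗ Pi X) = ∑ i, ⟪(Pi X (eW i) : V), (Pi Y (eW i) : V)⟫ := by
  rw [LinearMap.trace_eq_sum_inner _ eW]
  refine Fintype.sum_congr _ _ fun i => ?_
  rw [LinearMap.comp_apply, LinearMap.flip_apply, real_inner_comm, Submodule.coe_inner, hWein,
    hsymm Y, real_inner_comm]

section Sop

variable {V : Type*} [NormedAddCommGroup V] [InnerProductSpace ℝ V] [FiniteDimensional ℝ V]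
  {W : Submodule ℝ V} {Pi : W →ₗ[ℝ] W →ₗ[ℝ] ↥Wᗮ} {A : ↥Wᗮ →ₗ[ℝ] W →ₗ[ℝ] W}

theorem Sop_apply (X : W) (v : V) :
    Sop W Pi A X v = (Pi X (W.orthogonalProjectionOnto v) : V)
      - (A (Wᗮ.orthogonalProjectionOnto v) X : V) :=
  rfl

theorem Sop_apply_of_mem (X Z : W) : Sop W Pi A X Z = Pi X Z := by
  simp [Sop_apply, Submodule.orthogonalProjectionOnto_apply_of_mem_orthogonal
    (W.le_orthogonal_orthogonal Z.2)]

theorem Sop_apply_of_mem_orthogonal (X : W) (ξ : ↥Wᗮ) : Sop W Pi A X ξ = -(A ξ X : V) := by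
  simp [Sop_apply, Submodule.orthogonalProjectionOnto_apply_of_mem_orthogonal ξ.2]

theorem Sop_comp_Sop (X Y : W) :
    Sop W Pi A X ∘ₗ Sop W Pi A Y
      = -(Wᗮ.subtype ∘ₗ (Pi X ∘ₗ A.flip Y) ∘ₗ Wᗮ.orthogonalProjectionOnto.toLinearMap)
        - W.subtype ∘ₗ (A.flip X ∘ₗ Pi Y) ∘ₗ W.orthogonalProjectionOnto.toLinearMap := by
  ext v
  rw [LinearMap.comp_apply, Sop_apply Y, map_sub, Sop_apply_of_mem_orthogonal,
    Sop_apply_of_mem]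
  simp only [LinearMap.sub_apply, LinearMap.neg_apply, LinearMap.comp_apply,
    LinearMap.flip_apply, Submodule.subtype_apply, ContinuousLinearMap.coe_coe]
  abel

end Sop

/-- For all `X, Y ∈ W`, `-tr (S_X ∘ S_Y) = 2 ∑_A ⟨S_{e_A} X, S_{e_A} Y⟩` for any
orthonormal basis `(e_A)` of `W`. -/
theorem stmt_8 {V : Type*} [NormedAddCommGroup V] [InnerProductSpace ℝ V]
    [FiniteDimensional ℝ V] (W : Submodule ℝ V)
    (Pi : W →ₗ[ℝ] W →ₗ[ℝ] ↥Wᗮ) (A : ↥Wᗮ →ₗ[ℝ] W →ₗ[ℝ] W)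
    (hsymm : ∀ X Y : W, Pi X Y = Pi Y X)
    (hWein : ∀ (ξ : ↥Wᗮ) (X Y : W), ⟪((A ξ X : W) : V), (Y : V)⟫ = ⟪((Pi X Y : ↥Wᗮ) : V), (ξ : V)⟫)
    {ι : Type*} [Fintype ι] (eW : OrthonormalBasis ι ℝ ↥W) (X Y : W) :
    -LinearMap.trace ℝ V (Sop W Pi A X ∘ₗ Sop W Pi A Y)
      = 2 * ∑ i, ⟪Sop W Pi A (eW i) ((X : V)), Sop W Pi A (eW i) ((Y : V))⟫ := by
  rw [Sop_comp_Sop, map_sub, map_neg, neg_sub, sub_neg_eq_add,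
    Submodule.trace_subtype_comp_comp_orthogonalProjectionOnto,
    Submodule.trace_subtype_comp_comp_orthogonalProjectionOnto,
    LinearMap.trace_comp_comm' (A.flip Y) (Pi X),
    trace_flip_comp_eq_sum_inner hsymm hWein eW, trace_flip_comp_eq_sum_inner hsymm hWein eW]
  simp_rw [Sop_apply_of_mem, hsymm (eW _), real_inner_comm (Pi X _ : V)]
  ring
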